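/- Let ψ be a structural set and f a C¹ function from ℝ³ to ℝ_{0,3}. Then ψ∂[ν(f)] = −2 (f ψ∂) − ν(ψ∂ f), where ν(f) = Σᵢ ψⁱ f ψⁱ, f ψ∂ = Σᵢ (∂f/∂xᵢ) ψⁱ is the right Dirac operator, and ψ∂ f = Σᵢ ψⁱ ∂f/∂xᵢ. -/

import Mathlib

/-!
Since `ℝ_{0,3}` is finite-dimensional (it is linearly isomorphic to the exterior algebra of `ℝ³`),
the linear map `ν` is continuous and hence commutes with partial derivatives, so
`ψ∂[ν(f)] = Σᵢⱼ ψⁱψʲ (∂ᵢf) ψʲ`. Replacing `ψⁱψʲ` by `-2δᵢⱼ - ψʲψⁱ` splits this sum into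
`-2 Σᵢ (∂ᵢf) ψⁱ` and `-Σⱼ ψʲ (Σᵢ ψⁱ ∂ᵢf) ψʲ`.
-/
noncomputable section

abbrev V3 : Type := Fin 3 → ℝ

/-- The negative-definite quadratic form on `ℝ³`, so that `CliffordAlgebra Q3 = ℝ_{0,3}`. -/
def Q3 : QuadraticForm ℝ V3 := -(QuadraticMap.weightedSumSquares ℝ (fun _ : Fin 3 => (1:ℝ)))

/-- The real Clifford algebra `ℝ_{0,3}`. -/
abbrev Cl3 : Type := CliffordAlgebra Q3

namespace Cl3

def bCl : Module.Basis (Module.Free.ChooseBasisIndex ℝ Cl3) ℝ Cl3 := Module.Free.chooseBasis ℝ Cl3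

def toLp : Cl3 →ₗ[ℝ] lp (fun _ : Module.Free.ChooseBasisIndex ℝ Cl3 => ℝ) ⊤ where
  toFun x := ⟨fun i => bCl.repr x i, by
    apply memℓp_infty
    have h1 : (Set.range ((bCl.repr x) : _ → ℝ)).Finite := by
      apply Set.Finite.subset (((bCl.repr x).frange : Finset ℝ).finite_toSet.insert 0)
      rintro y ⟨i, rfl⟩
      by_cases h : (bCl.repr x) i = 0
      · simp [h]
      · exact Set.mem_insert_of_mem _ (by
          simp only [Finset.mem_coe, Finsupp.mem_frange]
          exact ⟨h, i, rfl⟩)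
    have h2 : (Set.range fun i => ‖(bCl.repr x) i‖).Finite := by
      have := h1.image norm
      apply this.subset
      rintro y ⟨i, rfl⟩
      exact ⟨(bCl.repr x) i, ⟨i, rfl⟩, rfl⟩
    exact h2.bddAbove⟩
  map_add' x y := by ext i; simp <;> rfl
  map_smul' c x := by ext i; simp

lemma toLp_injective : Function.Injective toLp := by
  intro x y h
  apply bCl.repr.injective
  ext i
  exact congrFun (congrArg Subtype.val h) i

instance : NormedAddCommGroup Cl3 := NormedAddCommGroup.induced Cl3 _ toLp toLp_injective
instance : NormedSpace ℝ Cl3 := NormedSpace.induced ℝ Cl3 _ toLp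

end Cl3

/-- Embedding of vectors `ℝ³ ⊂ ℝ_{0,3}`. -/
def ι3 : V3 →ₗ[ℝ] Cl3 := CliffordAlgebra.ι Q3

/-- `ψ` is a structural set: `ψⁱψʲ + ψʲψⁱ = -2δᵢⱼ` inside `ℝ_{0,3}`. -/
def StructuralSet (ψ : Fin 3 → V3) : Prop :=
  ∀ i j, ι3 (ψ i) * ι3 (ψ j) + ι3 (ψ j) * ι3 (ψ i)
      = algebraMap ℝ Cl3 (if i = j then -2 else 0)

/-- Partial derivative `∂f/∂xᵢ`. -/
def pd (i : Fin 3) (f : V3 → Cl3) : V3 → Cl3 := fun x => fderiv ℝ f x (Pi.single i 1)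

/-- Left Dirac operator `ψ∂ f = Σᵢ ψⁱ ∂f/∂xᵢ`. -/
def DL (ψ : Fin 3 → V3) (f : V3 → Cl3) : V3 → Cl3 := fun x => ∑ i, ι3 (ψ i) * pd i f x

/-- Right Dirac operator `f ψ∂ = Σᵢ (∂f/∂xᵢ) ψⁱ`. -/
def DR (ψ : Fin 3 → V3) (f : V3 → Cl3) : V3 → Cl3 := fun x => ∑ i, pd i f x * ι3 (ψ i)

/-- Two-sided operator `φ∂ f ψ∂ = Σᵢⱼ φⁱ (∂²f/∂xᵢ∂xⱼ) ψʲ`. -/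
def DLR (φ ψ : Fin 3 → V3) (f : V3 → Cl3) : V3 → Cl3 :=
  fun x => ∑ i, ∑ j, ι3 (φ i) * pd i (pd j f) x * ι3 (ψ j)

/-- Componentwise Laplacian. -/
def lap (f : V3 → Cl3) : V3 → Cl3 := fun x => ∑ i, pd i (pd i f) x

/-- `ν(a) = Σᵢ ψⁱ a ψⁱ`. -/
def nu (ψ : Fin 3 → V3) (a : Cl3) : Cl3 := ∑ i, ι3 (ψ i) * a * ι3 (ψ i)

/-- `ω(a) = Σᵢ φⁱ a ψⁱ`. -/
def om (φ ψ : Fin 3 → V3) (a : Cl3) : Cl3 := ∑ i, ι3 (φ i) * a * ι3 (ψ i)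

/-- `x_ψ = Σᵢ ψⁱ xᵢ`. -/
def xPsi (ψ : Fin 3 → V3) (x : V3) : Cl3 := ∑ i, x i • ι3 (ψ i)

instance ExteriorAlgebra.instModuleFinite {R M : Type*} [CommRing R] [AddCommGroup M] [Module R M]
    [Module.Free R M] [Module.Finite R M] : Module.Finite R (ExteriorAlgebra R M) := by
  classical
  let _ : LinearOrder (Module.Free.ChooseBasisIndex R M) := linearOrderOfSTO WellOrderingRel
  exact .of_basis (Module.Free.chooseBasis R M).ExteriorAlgebra

instance CliffordAlgebra.instModuleFinite {R M : Type*} [CommRing R] [AddCommGroup M] [Module R M]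
    [Module.Free R M] [Module.Finite R M] [Invertible (2 : R)] (Q : QuadraticForm R M) :
    Module.Finite R (CliffordAlgebra Q) :=
  .equiv (CliffordAlgebra.equivExterior Q).symm

theorem sum_mul_sandwich_of_anticomm {R A ι : Type*} [CommRing R] [Ring A] [Algebra R A]
    [Fintype ι] [DecidableEq ι] (e : ι → A)
    (he : ∀ i j, e i * e j + e j * e i = algebraMap R A (if i = j then -2 else 0)) (a : ι → A) :
    ∑ i, e i * ∑ j, e j * a i * e j
      = (-2 : R) • ∑ i, a i * e i - ∑ j, e j * (∑ i, e i * a i) * e j := by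
  have hterm : ∀ i j, e i * (e j * a i * e j)
      = (if i = j then (-2 : R) else 0) • (a i * e j) - e j * (e i * a i) * e j := by
    intro i j
    rw [Algebra.smul_def, ← he i j]
    noncomm_ring
  simp only [Finset.mul_sum, Finset.sum_mul, hterm, Finset.sum_sub_distrib, ite_smul, zero_smul,
    Finset.sum_ite_eq, Finset.mem_univ, if_true, Finset.smul_sum]
  rw [Finset.sum_comm (f := fun i j => e j * (e i * a i) * e j)]

def nuLinear (ψ : Fin 3 → V3) : Cl3 →ₗ[ℝ] Cl3 where
  toFun := nu ψ
  map_add' a b := by simp only [nu, mul_add, add_mul, Finset.sum_add_distrib]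
  map_smul' c a := by
    simp only [nu, Finset.smul_sum, mul_smul_comm, smul_mul_assoc, RingHom.id_apply]

theorem pd_comp_linearMap (L : Cl3 →ₗ[ℝ] Cl3) {f : V3 → Cl3} {x : V3}
    (hf : DifferentiableAt ℝ f x) (i : Fin 3) : pd i (fun y => L (f y)) x = L (pd i f x) := by
  have h := (L.toContinuousLinearMap.hasFDerivAt.comp x hf.hasFDerivAt).fderiv
  rw [pd, show (fun y => L (f y)) = L.toContinuousLinearMap ∘ f from rfl, h]
  rfl

/-- `ψ∂[ν(f)] = -2(fψ∂) - ν(ψ∂f)`. -/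
theorem stmt3 (ψ : Fin 3 → V3) (hψ : StructuralSet ψ)
    (f : V3 → Cl3) (hf : ContDiff ℝ 1 f) :
    ∀ x, DL ψ (fun y => nu ψ (f y)) x = (-2 : ℝ) • DR ψ f x - nu ψ (DL ψ f x) := by
  intro x
  have hν : ∀ i, pd i (fun y => nu ψ (f y)) x = nu ψ (pd i f x) :=
    pd_comp_linearMap (nuLinear ψ) ((hf.differentiable one_ne_zero) x)
  simp only [DL, hν]
  exact sum_mul_sandwich_of_anticomm (fun i => ι3 (ψ i)) hψ (fun i => pd i f x)
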